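/- For every regular language L over Σ (i.e., L = L(r) for some regular expression r), there is an NFA with at most |r| + 1 states accepting L, where |r| is the syntactic size of r. -/

import Mathlib

open RegularExpression

/-- The acceptance predicate √ on regular expressions. -/
inductive Surd {α : Type} : RegularExpression α → Prop
  | eps : Surd 1
  | star (r : RegularExpression α) : Surd (RegularExpression.star r)
  | plusL {r₁ r₂ : RegularExpression α} : Surd r₁ → Surd (r₁ + r₂)
  | plusR {r₁ r₂ : RegularExpression α} : Surd r₂ → Surd (r₁ + r₂)
  | comp {r₁ r₂ : RegularExpression α} : Surd r₁ → Surd r₂ → Surd (r₁ * r₂)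

/-- The SOS transition relation r —a→ r'. -/
inductive Deriv {α : Type} : RegularExpression α → α → RegularExpression α → Prop
  | char (a : α) : Deriv (RegularExpression.char a) a 1
  | plusL {r₁ r₂ r₁' : RegularExpression α} {a : α} :
      Deriv r₁ a r₁' → Deriv (r₁ + r₂) a r₁'
  | plusR {r₁ r₂ r₂' : RegularExpression α} {a : α} :
      Deriv r₂ a r₂' → Deriv (r₁ + r₂) a r₂'
  | compL {r₁ r₂ r₁' : RegularExpression α} {a : α} :
      Deriv r₁ a r₁' → Deriv (r₁ * r₂) a (r₁' * r₂)
  | compR {r₁ r₂ r₂' : RegularExpression α} {a : α} :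
      Surd r₁ → Deriv r₂ a r₂' → Deriv (r₁ * r₂) a r₂'
  | star {r r'' : RegularExpression α} {a : α} :
      Deriv r a r'' → Deriv (RegularExpression.star r) a (r'' * RegularExpression.star r)

/-- Multi-step transitions labelled by a word. -/
inductive Derivs {α : Type} : RegularExpression α → List α → RegularExpression α → Prop
  | nil (r : RegularExpression α) : Derivs r [] r
  | cons {r r' r'' : RegularExpression α} {a : α} {w : List α} :
      Deriv r a r' → Derivs r' w r'' → Derivs r (a :: w) r''

/-- The reachability set RS(r). -/
def RS {α : Type} (r : RegularExpression α) : Set (RegularExpression α) :=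
  {r' | Relation.ReflTransGen (fun s t => ∃ a, Deriv s a t) r r'}

/-- Syntactic size of a regular expression. -/
def rsize {α : Type} : RegularExpression α → ℕ
  | RegularExpression.zero => 1
  | RegularExpression.epsilon => 1
  | RegularExpression.char _ => 1
  | RegularExpression.plus r₁ r₂ => rsize r₁ + rsize r₂ + 1
  | RegularExpression.comp r₁ r₂ => rsize r₁ + rsize r₂ + 1
  | RegularExpression.star r => rsize r + 1

/-!
A word `w` is accepted by the transition system `—a→`, `√` from `r` iff `w ∈ L(r)`: soundness
is an induction on the run, completeness an induction on `r` which glues runs for the parts of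
`w`. So the automaton whose states are the expressions reachable from `r` recognises `L(r)`.
Every expression reachable in at least one step is produced by an occurrence of a character in
`r` (it is `1` composed with suffixes of `r`), hence `|RS(r)| ≤ |r| + 1`.
-/

section

variable {α : Type}

theorem Surd.nil_mem_matches' {r : RegularExpression α} (h : Surd r) : [] ∈ r.matches' := by
  induction h with
  | eps => rfl
  | star r => exact Language.nil_mem_kstar _
  | plusL _ ih => exact Or.inl ih
  | plusR _ ih => exact Or.inr ih
  | comp _ _ ih₁ ih₂ => exact ⟨[], ih₁, [], ih₂, rfl⟩

theorem Deriv.cons_mem_matches' {r r' : RegularExpression α} {a : α} (h : Deriv r a r')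
    {w : List α} (hw : w ∈ r'.matches') : a :: w ∈ r.matches' := by
  induction h generalizing w with
  | char a =>
    obtain rfl : w = [] := hw
    rfl
  | plusL _ ih => exact Or.inl (ih hw)
  | plusR _ ih => exact Or.inr (ih hw)
  | compL _ ih =>
    obtain ⟨u, hu, v, hv, rfl⟩ := hw
    exact ⟨_ :: u, ih hu, v, hv, rfl⟩
  | compR hs _ ih => exact ⟨[], hs.nil_mem_matches', _, ih hw, rfl⟩
  | star _ ih =>
    obtain ⟨u, hu, v, hv, rfl⟩ := hw
    exact mul_kstar_le_kstar (α := Language _) (Language.append_mem_mul (ih hu) hv)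

theorem Derivs.append {r s t : RegularExpression α} {u v : List α}
    (h₁ : Derivs r u s) (h₂ : Derivs s v t) : Derivs r (u ++ v) t := by
  induction h₁ with
  | nil => exact h₂
  | cons hd _ ih => exact .cons hd (ih h₂)

theorem Derivs.comp_right {r s : RegularExpression α} {w : List α} (h : Derivs r w s)
    (r₂ : RegularExpression α) : Derivs (r * r₂) w (s * r₂) := by
  induction h with
  | nil => exact .nil _
  | cons hd _ ih => exact .cons (.compL hd) ih

theorem Derivs.eq_of_nil {r s : RegularExpression α} (h : Derivs r [] s) : s = r := by
  cases h; rfl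

def SosAccepts (r : RegularExpression α) (w : List α) : Prop :=
  ∃ r', Derivs r w r' ∧ Surd r'

theorem SosAccepts.mem_matches' {r : RegularExpression α} {w : List α} (h : SosAccepts r w) :
    w ∈ r.matches' := by
  obtain ⟨r', hd, hs⟩ := h
  induction hd with
  | nil => exact hs.nil_mem_matches'
  | cons hd _ ih => exact hd.cons_mem_matches' (ih hs)

theorem SosAccepts.of_derivs_append {r s : RegularExpression α} {u v : List α}
    (hu : Derivs r u s) (hv : SosAccepts s v) : SosAccepts r (u ++ v) :=
  let ⟨t, hd, ht⟩ := hv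
  ⟨t, hu.append hd, ht⟩

theorem SosAccepts.plus_left {r₁ : RegularExpression α} {w : List α} (h : SosAccepts r₁ w)
    (r₂ : RegularExpression α) : SosAccepts (r₁ + r₂) w := by
  obtain ⟨s, hd, hs⟩ := h
  cases hd with
  | nil => exact ⟨_, .nil _, .plusL hs⟩
  | cons h₁ h₂ => exact ⟨s, .cons (.plusL h₁) h₂, hs⟩

theorem SosAccepts.plus_right {r₂ : RegularExpression α} {w : List α} (h : SosAccepts r₂ w)
    (r₁ : RegularExpression α) : SosAccepts (r₁ + r₂) w := by
  obtain ⟨s, hd, hs⟩ := h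
  cases hd with
  | nil => exact ⟨_, .nil _, .plusR hs⟩
  | cons h₁ h₂ => exact ⟨s, .cons (.plusR h₁) h₂, hs⟩

theorem SosAccepts.comp_of_surd {s r₂ : RegularExpression α} {w : List α} (hs : Surd s)
    (h : SosAccepts r₂ w) : SosAccepts (s * r₂) w := by
  obtain ⟨t, hd, ht⟩ := h
  cases hd with
  | nil => exact ⟨_, .nil _, .comp hs ht⟩
  | cons h₁ h₂ => exact ⟨t, .cons (.compR hs h₁) h₂, ht⟩

theorem SosAccepts.comp {r₁ r₂ : RegularExpression α} {u v : List α} (hu : SosAccepts r₁ u)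
    (hv : SosAccepts r₂ v) : SosAccepts (r₁ * r₂) (u ++ v) :=
  let ⟨_, hd, hs⟩ := hu
  .of_derivs_append (hd.comp_right r₂) (.comp_of_surd hs hv)

theorem SosAccepts.star_append {r : RegularExpression α} {u v : List α} (hu : SosAccepts r u)
    (hv : SosAccepts r.star v) : SosAccepts r.star (u ++ v) := by
  obtain ⟨s, hd, hs⟩ := hu
  cases hd with
  | nil => exact hv
  | cons h₁ h₂ =>
    exact .of_derivs_append (.cons (.star h₁) (h₂.comp_right _)) (.comp_of_surd hs hv)

theorem SosAccepts.of_mem_matches' {r : RegularExpression α} {w : List α}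
    (hw : w ∈ r.matches') : SosAccepts r w := by
  induction r generalizing w with
  | zero => exact absurd hw id
  | epsilon =>
    obtain rfl : w = [] := hw
    exact ⟨1, .nil _, .eps⟩
  | char a =>
    obtain rfl : w = [a] := hw
    exact ⟨1, .cons (.char a) (.nil _), .eps⟩
  | plus r₁ r₂ ih₁ ih₂ =>
    rcases hw with hw | hw
    · exact (ih₁ hw).plus_left r₂
    · exact (ih₂ hw).plus_right r₁
  | comp r₁ r₂ ih₁ ih₂ =>
    obtain ⟨u, hu, v, hv, rfl⟩ := hw
    exact (ih₁ hu).comp (ih₂ hv)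
  | star r ih =>
    obtain ⟨L, rfl, hL⟩ := Language.mem_kstar.mp hw
    clear hw
    induction L with
    | nil => exact ⟨_, .nil _, .star r⟩
    | cons u L ihL =>
      exact (ih (hL u List.mem_cons_self)).star_append
        (ihL fun y hy => hL y (List.mem_cons_of_mem _ hy))

theorem sosAccepts_iff_mem_matches' {r : RegularExpression α} {w : List α} :
    SosAccepts r w ↔ w ∈ r.matches' :=
  ⟨SosAccepts.mem_matches', SosAccepts.of_mem_matches'⟩

/-- Over-approximates the states reachable from `r` in at least one step, with one entry per
occurrence of a character in `r`. -/
def stepTargets : RegularExpression α → List (RegularExpression α)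
  | RegularExpression.zero => []
  | RegularExpression.epsilon => []
  | RegularExpression.char _ => [1]
  | RegularExpression.plus r₁ r₂ => stepTargets r₁ ++ stepTargets r₂
  | RegularExpression.comp r₁ r₂ => (stepTargets r₁).map (· * r₂) ++ stepTargets r₂
  | RegularExpression.star r => (stepTargets r).map (· * r.star)

theorem length_stepTargets_le (r : RegularExpression α) : (stepTargets r).length ≤ rsize r := by
  induction r with
  | zero | epsilon | char => simp [stepTargets, rsize]
  | plus _ _ ih₁ ih₂ | comp _ _ ih₁ ih₂ =>
    simp only [stepTargets, rsize, List.length_append, List.length_map]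
    omega
  | star _ ih =>
    simp only [stepTargets, rsize, List.length_map]
    omega

theorem Deriv.mem_stepTargets {r s : RegularExpression α} {a : α} (h : Deriv r a s) :
    s ∈ stepTargets r := by
  induction h with
  | char => simp [stepTargets]
  | plusL _ ih => exact List.mem_append_left _ ih
  | plusR _ ih => exact List.mem_append_right _ ih
  | compL _ ih => exact List.mem_append_left _ (List.mem_map_of_mem ih)
  | compR _ _ ih => exact List.mem_append_right _ ih
  | star _ ih => exact List.mem_map_of_mem ih

theorem Deriv.mem_stepTargets_of_mem {r s t : RegularExpression α} {a : α}
    (hs : s ∈ stepTargets r) (h : Deriv s a t) : t ∈ stepTargets r := by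
  induction r generalizing s t with
  | zero | epsilon => simp [stepTargets] at hs
  | char =>
    obtain rfl : s = 1 := List.mem_singleton.mp hs
    cases h
  | plus r₁ r₂ ih₁ ih₂ =>
    rcases List.mem_append.mp hs with hs | hs
    · exact List.mem_append_left _ (ih₁ hs h)
    · exact List.mem_append_right _ (ih₂ hs h)
  | comp r₁ r₂ ih₁ ih₂ =>
    rcases List.mem_append.mp hs with hs | hs
    · obtain ⟨s₁, hs₁, rfl⟩ := List.mem_map.mp hs
      cases h with
      | compL h => exact List.mem_append_left _ (List.mem_map_of_mem (ih₁ hs₁ h))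
      | compR _ h => exact List.mem_append_right _ h.mem_stepTargets
    · exact List.mem_append_right _ (ih₂ hs h)
  | star r ih =>
    obtain ⟨s₁, hs₁, rfl⟩ := List.mem_map.mp hs
    cases h with
    | compL h => exact List.mem_map_of_mem (ih hs₁ h)
    | compR _ h =>
      cases h with
      | star h => exact List.mem_map_of_mem h.mem_stepTargets

theorem RS_subset_stepTargets (r : RegularExpression α) :
    RS r ⊆ {s | s ∈ r :: stepTargets r} := by
  intro s hs
  induction hs with
  | refl => exact List.mem_cons_self
  | tail _ hstep ih =>
    obtain ⟨a, h⟩ := hstep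
    rcases List.mem_cons.mp ih with rfl | ih
    · exact List.mem_cons_of_mem _ h.mem_stepTargets
    · exact List.mem_cons_of_mem _ (h.mem_stepTargets_of_mem ih)

theorem finite_RS (r : RegularExpression α) : (RS r).Finite :=
  (List.finite_toSet _).subset (RS_subset_stepTargets r)

theorem ncard_RS_le (r : RegularExpression α) : (RS r).ncard ≤ rsize r + 1 := by
  classical
  calc (RS r).ncard ≤ {s | s ∈ r :: stepTargets r}.ncard :=
        Set.ncard_le_ncard (RS_subset_stepTargets r) (List.finite_toSet _)
    _ ≤ (r :: stepTargets r).length := by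
        rw [← List.coe_toFinset, Set.ncard_coe_finset]
        exact List.toFinset_card_le _
    _ ≤ rsize r + 1 := Nat.succ_le_succ (length_stepTargets_le r)

theorem Deriv.mem_RS {r s t : RegularExpression α} {a : α} (hs : s ∈ RS r) (h : Deriv s a t) :
    t ∈ RS r :=
  Relation.ReflTransGen.tail hs ⟨a, h⟩

theorem Derivs.mem_RS {r s : RegularExpression α} {w : List α} (h : Derivs r w s) :
    s ∈ RS r := by
  induction h with
  | nil => exact Relation.ReflTransGen.refl
  | cons hd _ ih => exact Relation.ReflTransGen.head ⟨_, hd⟩ ih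

/-- The automaton `M_r`. -/
def sosNFA (r : RegularExpression α) : NFA α (RS r) where
  step q a := {q' | Deriv q.1 a q'.1}
  start := {q | q.1 = r}
  accept := {q | Surd q.1}

theorem sosNFA_path_iff {r : RegularExpression α} {q q' : RS r} {w : List α} :
    Nonempty ((sosNFA r).Path q q' w) ↔ Derivs q.1 w q'.1 := by
  constructor
  · rintro ⟨p⟩
    induction p with
    | nil => exact .nil _
    | cons _ _ _ _ _ hstep _ ih => exact .cons hstep ih
  · intro h
    induction w generalizing q with
    | nil =>
      obtain rfl : q' = q := Subtype.ext h.eq_of_nil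
      exact ⟨.nil _⟩
    | cons a w ih =>
      obtain _ | ⟨hstep, hrest⟩ := h
      obtain ⟨p⟩ := ih (q := ⟨_, hstep.mem_RS q.2⟩) hrest
      exact ⟨.cons _ q q' a w hstep p⟩

theorem sosNFA_accepts (r : RegularExpression α) : (sosNFA r).accepts = r.matches' := by
  ext w
  rw [NFA.accepts_iff_exists_path, ← sosAccepts_iff_mem_matches']
  constructor
  · rintro ⟨q, hq, q', hq', hp⟩
    rw [← show q.1 = r from hq]
    exact ⟨q'.1, sosNFA_path_iff.mp hp, hq'⟩
  · rintro ⟨s, hd, hs⟩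
    exact ⟨⟨r, .refl⟩, rfl, ⟨s, hd.mem_RS⟩, hs, sosNFA_path_iff.mpr hd⟩

end

theorem regular_lang_small_nfa {α : Type} (L : Language α) (r : RegularExpression α)
    (hL : L = r.matches') :
    ∃ (Q : Type) (_ : Fintype Q) (M : NFA α Q),
      Fintype.card Q ≤ rsize r + 1 ∧ M.accepts = L := by
  let _ := (finite_RS r).fintype
  refine ⟨RS r, inferInstance, sosNFA r, ?_, by rw [sosNFA_accepts, hL]⟩
  rw [← Nat.card_eq_fintype_card, Nat.card_coe_set_eq]
  exact ncard_RS_le r
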